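/- For each $\mathbf{n} \in \mathbf{D}$, the function $f(\mathbf{n}) = \sum_{k=0}^{\infty} \sum_{\sigma \in \{0,1\}^k} \frac{1}{(k+1)2^{k/2}} \cdot \frac{1}{\lambda(A(\sigma,\mathbf{n}(k)))} \cdot e(\sigma,\mathbf{n}(k)) \cdot \chi_{A(\sigma,\mathbf{n}(k))}$ with values in $\ell_2$ is Pettis integrable, and for every $\tau \in \{0,1\}^i$ we have $\|\int_{I_\tau} f(\mathbf{n})_{|\tau}\| = 2^{-i/2} \sqrt{\sum_{k=i}^{\infty} \frac{1}{(k+1)^2}}$. -/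

import Mathlib

open MeasureTheory
open scoped Classical

noncomputable section

/-- The Hilbert space `ℓ₂` of square-summable real sequences. -/
abbrev H2 : Type := lp (fun _ : ℕ => ℝ) 2

/-- The index set `B = {(σ,i) : σ ∈ {0,1}^{<∞}, 0 ≤ i ≤ |σ|}`. -/
def Bidx : Type := Σ σ : List Bool, Fin (σ.length + 1)

/-- Left endpoint of the dyadic interval `I_σ`. -/
noncomputable def dyadicLeft (σ : List Bool) : ℝ :=
  ∑ i ∈ Finset.range σ.length, if σ.getD i false then (2:ℝ)⁻¹ ^ (i+1) else 0

/-- The dyadic interval `I_σ ⊆ [0,1]` of length `2^{-|σ|}`: `I_∅ = [0,1]`,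
`I_{σ0}` is the left half and `I_{σ1}` the right half of `I_σ`. -/
noncomputable def dyadicInterval (σ : List Bool) : Set ℝ :=
  Set.Icc (dyadicLeft σ) (dyadicLeft σ + (2:ℝ)⁻¹ ^ σ.length)

/-- `f` is Pettis integrable with respect to `μ`: every continuous functional composed with
`f` is integrable, and over each measurable set there is a vector representing the integrals. -/
def PettisIntegrable {X : Type} [NormedAddCommGroup X] [NormedSpace ℝ X]
    (f : ℝ → X) (μ : MeasureTheory.Measure ℝ) : Prop :=
  (∀ φ : X →L[ℝ] ℝ, MeasureTheory.Integrable (fun t => φ (f t)) μ) ∧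
  ∀ E : Set ℝ, MeasurableSet E → ∃ v : X, ∀ φ : X →L[ℝ] ℝ, φ v = ∫ t in E, φ (f t) ∂μ

/-- `v` is the Pettis integral of `f` over the set `E` (w.r.t. `μ`). -/
def IsPettisIntegralOn {X : Type} [NormedAddCommGroup X] [NormedSpace ℝ X]
    (f : ℝ → X) (μ : MeasureTheory.Measure ℝ) (E : Set ℝ) (v : X) : Prop :=
  ∀ φ : X →L[ℝ] ℝ, φ v = ∫ t in E, φ (f t) ∂μ

/-- The basic function `f = ∑_{(σ,i) ∈ B} c(σ,i) (1/λ(A(σ,i))) e(σ,i) χ_{A(σ,i)}`. -/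
noncomputable def basicFun {X : Type} [NormedAddCommGroup X] [NormedSpace ℝ X]
    (c : Bidx → ℝ) (A : Bidx → Set ℝ) (e : Bidx → X) : ℝ → X :=
  fun t => ∑' p : Bidx,
    Set.indicator (A p) (fun _ => ((MeasureTheory.volume (A p)).toReal)⁻¹ • (c p • e p)) t

/-- The restriction `f_{|τ}`: the subseries of the basic function over indices `(σ,i)`
with `σ` an extension of `τ`. -/
noncomputable def basicFunRes {X : Type} [NormedAddCommGroup X] [NormedSpace ℝ X]
    (τ : List Bool) (c : Bidx → ℝ) (A : Bidx → Set ℝ) (e : Bidx → X) : ℝ → X :=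
  basicFun (fun p => if τ <+: p.1 then c p else 0) A e

/-- Coefficients of the special basic function `f(𝐧)`: the coefficient of `(σ, i)` is
`1/((k+1)2^{k/2})` when `|σ| = k` and `i = 𝐧(k)`, and `0` otherwise. -/
noncomputable def specialCoef (n : ℕ → ℕ) : Bidx → ℝ := fun p =>
  if (p.2 : ℕ) = n p.1.length then
    (((p.1.length : ℝ) + 1) * (2:ℝ) ^ ((p.1.length : ℝ) / 2))⁻¹
  else 0


/-!
Because the sets `A p` are pairwise disjoint, for a functional `φ` the function `φ ∘ f` is a
countable sum of step functions `χ_{A p} c_p φ(e_p) / λ(A p)`, and `∑ |c_p φ(e_p)| < ∞` by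
Cauchy–Schwarz and Bessel's inequality. Integrating term by term over `E` shows that
`∑ c_p (λ(A p ∩ E) / λ(A p)) e_p` is the Pettis integral over `E`. Every `A p` with `p` extending
`τ` lies in `I_τ`, so the Pettis integral of `f_{|τ}` over `I_τ` is `∑ c_p e_p` over those `p`;
as `τ` has `2^(k-i)` extensions of length `k`, its squared norm is
`∑_{k ≥ i} 2^(k-i) / ((k+1)² 2^k)`.
-/

instance : Countable Bidx := inferInstanceAs (Countable (Σ σ : List Bool, Fin (σ.length + 1)))

open Function
open scoped ENNReal

lemma dyadicLeft_append_singleton (σ : List Bool) (b : Bool) :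
    dyadicLeft (σ ++ [b]) = dyadicLeft σ + if b then (2:ℝ)⁻¹ ^ (σ.length + 1) else 0 := by
  unfold dyadicLeft
  rw [List.length_append, List.length_singleton, Finset.sum_range_succ,
    List.getD_append_right _ _ _ _ le_rfl, Nat.sub_self]
  congr 1
  exact Finset.sum_congr rfl fun i hi => by
    rw [List.getD_append _ _ _ _ (Finset.mem_range.mp hi)]

lemma dyadicInterval_append_singleton_subset (σ : List Bool) (b : Bool) :
    dyadicInterval (σ ++ [b]) ⊆ dyadicInterval σ := by
  unfold dyadicInterval
  rw [dyadicLeft_append_singleton, List.length_append, List.length_singleton, pow_succ]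
  have : (0:ℝ) < (2:ℝ)⁻¹ ^ σ.length := by positivity
  apply Set.Icc_subset_Icc <;> cases b <;> simp <;> linarith

lemma dyadicInterval_anti {τ σ : List Bool} (h : τ <+: σ) :
    dyadicInterval σ ⊆ dyadicInterval τ := by
  obtain ⟨ρ, rfl⟩ := h
  induction ρ using List.reverseRecOn with
  | nil => simp
  | append_singleton ρ b ih =>
    rw [← List.append_assoc]
    exact (dyadicInterval_append_singleton_subset _ b).trans ih

lemma dyadicInterval_subset_Icc (σ : List Bool) : dyadicInterval σ ⊆ Set.Icc 0 1 := by
  simpa [dyadicInterval, dyadicLeft] using dyadicInterval_anti (List.nil_prefix (l := σ))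

section Hilbert

variable {ι E : Type*} [NormedAddCommGroup E] [InnerProductSpace ℝ E] [CompleteSpace E]
  {e : ι → E} {a : ι → ℝ}

lemma Orthonormal.summable_smul (he : Orthonormal ℝ e) (ha : Summable fun i => a i ^ 2) :
    Summable fun i => a i • e i := by
  simpa using (he.orthogonalFamily.summable_iff_norm_sq_summable a).2 (by simpa using ha)

lemma Orthonormal.norm_tsum_smul_sq (he : Orthonormal ℝ e) (ha : Summable fun i => a i ^ 2) :
    ‖∑' i, a i • e i‖ ^ 2 = ∑' i, a i ^ 2 := by
  have hfin : ∀ s : Finset ι, ‖∑ i ∈ s, a i • e i‖ ^ 2 = ∑ i ∈ s, a i ^ 2 := fun s => by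
    simpa using he.orthogonalFamily.norm_sum a s
  refine (HasSum.tsum_eq ?_).symm
  exact (((continuous_norm.pow 2).tendsto _).comp (he.summable_smul ha).hasSum).congr hfin

lemma Orthonormal.summable_sq_apply (he : Orthonormal ℝ e) (φ : StrongDual ℝ E) :
    Summable fun i => φ (e i) ^ 2 := by
  obtain ⟨u, rfl⟩ := (InnerProductSpace.toDual ℝ E).surjective φ
  simpa [real_inner_comm] using he.inner_products_summable (x := u)

end Hilbert

lemma summable_abs_mul_of_summable_sq {ι : Type*} {a b : ι → ℝ} (ha : Summable fun i => a i ^ 2)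
    (hb : Summable fun i => b i ^ 2) : Summable fun i => |a i * b i| := by
  refine .of_nonneg_of_le (fun i => abs_nonneg _) (fun i => ?_) ((ha.add hb).div_const 2)
  have := two_mul_le_add_sq |a i| |b i|
  rw [sq_abs, sq_abs] at this
  rw [abs_mul]
  linarith

lemma summable_indicator_of_pairwise_disjoint {α ι M : Type*} [AddCommMonoid M]
    [TopologicalSpace M] {A : ι → Set α} (hA : Pairwise (Disjoint on A)) (g : ι → M) (x : α) :
    Summable fun i => (A i).indicator (fun _ => g i) x := by
  refine summable_of_hasFiniteSupport (Set.Subsingleton.finite ?_)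
  intro i hi j hj
  by_contra hij
  exact Set.disjoint_left.mp (hA hij) (Set.mem_of_indicator_ne_zero hi)
    (Set.mem_of_indicator_ne_zero hj)

section Measure

variable {α : Type*} [MeasurableSpace α] {μ ν : Measure α}

lemma measureReal_div_le_one (h : ν ≤ μ) (s : Set α) : ν.real s / μ.real s ≤ 1 := by
  by_cases hs : μ s = ∞
  · simp [measureReal_def, hs]
  exact div_le_one_of_le₀ (ENNReal.toReal_mono hs (h s)) measureReal_nonneg

lemma enorm_inv_measureReal_mul_le_one (h : ν ≤ μ) (s : Set α) :
    ‖(μ.real s)⁻¹‖ₑ * ν s ≤ 1 := by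
  by_cases hs : μ s = ∞
  · simp [measureReal_def, hs]
  calc ‖(μ.real s)⁻¹‖ₑ * ν s ≤ ‖(μ.real s)⁻¹‖ₑ * ‖μ.real s‖ₑ := by
        gcongr
        rw [Real.enorm_of_nonneg measureReal_nonneg, measureReal_def, ENNReal.ofReal_toReal hs]
        exact h s
    _ = ‖(μ.real s)⁻¹ * μ.real s‖ₑ := (enorm_mul _ _).symm
    _ ≤ 1 := by
        by_cases h0 : μ.real s = 0 <;> simp [h0]

lemma integrable_tsum_of_tsum_lintegral_ne_top {ι : Type*} [Countable ι] {f : ι → α → ℝ}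
    (hf : ∀ i, Measurable (f i)) (h : ∑' i, ∫⁻ x, ‖f i x‖ₑ ∂μ ≠ ∞) :
    Integrable (fun x => ∑' i, f i x) μ := by
  refine ⟨(Measurable.tsum hf).aestronglyMeasurable, ?_⟩
  calc ∫⁻ x, ‖∑' i, f i x‖ₑ ∂μ ≤ ∫⁻ x, ∑' i, ‖f i x‖ₑ ∂μ :=
        lintegral_mono fun x => enorm_tsum_le_tsum_enorm
    _ = ∑' i, ∫⁻ x, ‖f i x‖ₑ ∂μ := lintegral_tsum fun i => (hf i).enorm.aemeasurable
    _ < ∞ := h.lt_top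

end Measure

lemma clm_basicFun_apply {X : Type} [NormedAddCommGroup X] [NormedSpace ℝ X] {A : Bidx → Set ℝ}
    (hA : Pairwise (Disjoint on A)) (c : Bidx → ℝ) (e : Bidx → X) (φ : StrongDual ℝ X) (t : ℝ) :
    φ (basicFun c A e t) =
      ∑' p, (A p).indicator (fun _ => (volume.real (A p))⁻¹ * c p * φ (e p)) t := by
  rw [basicFun, φ.map_tsum (summable_indicator_of_pairwise_disjoint hA _ t)]
  refine tsum_congr fun p => ?_
  by_cases ht : t ∈ A p <;> simp [ht, measureReal_def, mul_assoc]

theorem clm_basicFun_integral {E : Type} [NormedAddCommGroup E] [InnerProductSpace ℝ E]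
    [CompleteSpace E] {A : Bidx → Set ℝ} (hAm : ∀ p, MeasurableSet (A p))
    (hA : Pairwise (Disjoint on A)) {e : Bidx → E} (he : Orthonormal ℝ e) {c : Bidx → ℝ}
    (hc : Summable fun p => c p ^ 2) {ν : Measure ℝ} (hν : ν ≤ volume) (φ : StrongDual ℝ E) :
    Integrable (fun t => φ (basicFun c A e t)) ν ∧
      ∫ t, φ (basicFun c A e t) ∂ν =
        φ (∑' p, (c p * (ν.real (A p) / volume.real (A p))) • e p) := by
  set r : Bidx → ℝ := fun p => (volume.real (A p))⁻¹ * c p * φ (e p)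
  have hmeas : ∀ p, Measurable ((A p).indicator fun _ => r p) :=
    fun p => measurable_const.indicator (hAm p)
  have hlint : ∀ p, ∫⁻ t, ‖(A p).indicator (fun _ => r p) t‖ₑ ∂ν = ‖r p‖ₑ * ν (A p) := fun p => by
    simp only [enorm_indicator_eq_indicator_enorm, lintegral_indicator_const (hAm p)]
  have hfinite : ∑' p, ∫⁻ t, ‖(A p).indicator (fun _ => r p) t‖ₑ ∂ν ≠ ∞ := by
    have hφe := summable_abs_mul_of_summable_sq hc (he.summable_sq_apply φ)
    refine ne_top_of_le_ne_top ((tsum_enorm_ne_top_iff_summable_norm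
      (f := fun p => c p * φ (e p))).2 hφe) ?_
    refine ENNReal.tsum_le_tsum fun p => ?_
    calc ∫⁻ t, ‖(A p).indicator (fun _ => r p) t‖ₑ ∂ν
        = ‖(volume.real (A p))⁻¹‖ₑ * ν (A p) * ‖c p * φ (e p)‖ₑ := by
          simp only [hlint, r, enorm_mul]
          ring
      _ ≤ ‖c p * φ (e p)‖ₑ := by
          grw [enorm_inv_measureReal_mul_le_one hν, one_mul]
  have hsummable : Summable fun p => (c p * (ν.real (A p) / volume.real (A p))) • e p := by
    refine he.summable_smul (.of_nonneg_of_le (fun p => sq_nonneg _) (fun p => ?_) hc)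
    have h0 : 0 ≤ ν.real (A p) / volume.real (A p) := by positivity
    have h1 := measureReal_div_le_one hν (A p)
    rw [mul_pow]
    exact mul_le_of_le_one_right (sq_nonneg _) (pow_le_one₀ h0 h1)
  simp only [clm_basicFun_apply hA]
  refine ⟨integrable_tsum_of_tsum_lintegral_ne_top hmeas hfinite, ?_⟩
  rw [integral_tsum (fun p => (hmeas p).aestronglyMeasurable) hfinite, φ.map_tsum hsummable]
  refine tsum_congr fun p => ?_
  rw [integral_indicator_const _ (hAm p), map_smul, smul_eq_mul, smul_eq_mul]
  ring

lemma hasSum_two_pow_length {H : ℕ → ℝ} (h0 : ∀ k, 0 ≤ H k)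
    (hs : Summable fun k => 2 ^ k * H k) :
    HasSum (fun ρ : List Bool => H ρ.length) (∑' k, 2 ^ k * H k) := by
  have hfiber : ∀ k, ∑' _ : Fin k → Bool, H k = 2 ^ k * H k := by simp [tsum_fintype]
  have hsig : Summable fun x : Σ k, Fin k → Bool => H x.1 :=
    (summable_sigma_of_nonneg fun x => h0 x.1).2 ⟨fun k => .of_finite, by simpa [hfiber] using hs⟩
  have : HasSum (fun x : Σ k, Fin k → Bool => H x.1) (∑' k, 2 ^ k * H k) := by
    simpa [hsig.tsum_sigma, hfiber] using hsig.hasSum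
  exact List.equivSigmaTuple.hasSum_iff.mpr this

lemma summable_inv_add_sq (i : ℕ) : Summable fun m : ℕ => (((i:ℝ) + m + 1)⁻¹) ^ 2 := by
  refine ((summable_nat_add_iff (i + 1)).2 (Real.summable_nat_pow_inv.2 one_lt_two)).congr
    fun m => ?_
  rw [inv_pow]
  push_cast
  ring

lemma specialCoef_sq (n : ℕ → ℕ) (p : Bidx) :
    specialCoef n p ^ 2 = if (p.2 : ℕ) = n p.1.length
      then (((p.1.length : ℝ) + 1) ^ 2 * 2 ^ p.1.length)⁻¹ else 0 := by
  unfold specialCoef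
  split_ifs
  · rw [inv_pow, mul_pow, ← Real.rpow_mul_natCast (by norm_num)]
    norm_num
  · simp

lemma hasSum_sq_specialCoef_restrict {n : ℕ → ℕ} (hn : ∀ k, n k ≤ k) (τ : List Bool) :
    HasSum (fun p : Bidx => (if τ <+: p.1 then specialCoef n p else 0) ^ 2)
      ((2 ^ τ.length)⁻¹ * ∑' m : ℕ, (((τ.length : ℝ) + m + 1)⁻¹) ^ 2) := by
  set f := fun p : Bidx => (if τ <+: p.1 then specialCoef n p else 0) ^ 2
  let K : List Bool → Bidx := fun ρ => ⟨τ ++ ρ, n (τ ++ ρ).length, Nat.lt_succ_of_le (hn _)⟩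
  have hK : Injective K := fun ρ ρ' h => List.append_cancel_left (congrArg Sigma.fst h)
  have hsupp : support f ⊆ Set.range K := by
    rintro ⟨σ, j⟩ hp
    have hτ : τ <+: σ := by_contra fun h => hp (by simp [f, h])
    have hj : (j : ℕ) = n σ.length := by_contra fun h => hp (by simp [f, hτ, specialCoef_sq, h])
    obtain ⟨ρ, rfl⟩ := hτ
    exact ⟨ρ, congrArg (Sigma.mk (τ ++ ρ)) (Fin.ext hj.symm)⟩
  set H : ℕ → ℝ := fun m => ((((τ.length + m : ℕ) : ℝ) + 1) ^ 2 * 2 ^ (τ.length + m))⁻¹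
  have hterm : ∀ m, 2 ^ m * H m = (2 ^ τ.length)⁻¹ * (((τ.length : ℝ) + m + 1)⁻¹) ^ 2 := by
    intro m
    simp only [H, pow_add]
    push_cast
    field_simp
  have hH := hasSum_two_pow_length (H := H) (fun m => by positivity)
    (((summable_inv_add_sq τ.length).mul_left _).congr fun m => (hterm m).symm)
  rw [tsum_congr hterm, tsum_mul_left] at hH
  refine (hK.hasSum_iff (support_subset_iff'.mp hsupp)).mp (hH.congr_fun fun ρ => ?_)
  show f (K ρ) = H ρ.length
  simp [f, K, H, specialCoef_sq]

lemma sqrt_inv_two_pow_mul (i : ℕ) (S : ℝ) :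
    √((2 ^ i)⁻¹ * S) = (2:ℝ) ^ (-(i:ℝ) / 2) * √S := by
  rw [Real.sqrt_mul (by positivity), Real.sqrt_eq_rpow, ← Real.rpow_natCast, ← Real.rpow_neg
    (by norm_num), ← Real.rpow_mul (by norm_num)]
  ring_nf

/-- Lemma 3.2: for `𝐧 ∈ D`, the special basic function `f(𝐧)` with values in `ℓ₂` is
Pettis integrable and for `τ ∈ {0,1}^i`,
`‖∫_{I_τ} f(𝐧)_{|τ}‖ = 2^{-i/2} √(∑_{k=i}^∞ 1/(k+1)²)`. -/
theorem stmt8 (A : Bidx → Set ℝ) (hAc : ∀ p, IsClosed (A p))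
    (hAs : ∀ p : Bidx, A p ⊆ dyadicInterval p.1)
    (hApos : ∀ p, 0 < volume (A p))
    (hdisj : ∀ p q : Bidx, p ≠ q → Disjoint (A p) (A q))
    (e : Bidx → H2) (he : Orthonormal ℝ e)
    (n : ℕ → ℕ) (hn : ∀ i, n i ≤ i) :
    PettisIntegrable (basicFun (specialCoef n) A e) (volume.restrict (Set.Icc 0 1)) ∧
    ∀ (i : ℕ) (τ : List Bool), τ.length = i → ∀ v : H2,
      IsPettisIntegralOn (basicFunRes τ (specialCoef n) A e)
        (volume.restrict (Set.Icc 0 1)) (dyadicInterval τ) v →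
      ‖v‖ = (2:ℝ) ^ (-(i:ℝ)/2) *
        Real.sqrt (∑' m : ℕ, (((i:ℝ) + (m:ℝ) + 1)⁻¹) ^ 2) := by
  set μ : Measure ℝ := volume.restrict (Set.Icc 0 1)
  have hAm : ∀ p, MeasurableSet (A p) := fun p => (hAc p).measurableSet
  have hμ : ∀ E, μ.restrict E ≤ volume := fun E =>
    Measure.restrict_le_self.trans Measure.restrict_le_self
  have hc : Summable fun p => specialCoef n p ^ 2 := by
    simpa using (hasSum_sq_specialCoef_restrict hn []).summable
  refine ⟨⟨fun φ => (clm_basicFun_integral hAm hdisj he hc Measure.restrict_le_self φ).1,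
      fun E _ => ⟨_, fun φ => (clm_basicFun_integral hAm hdisj he hc (hμ E) φ).2.symm⟩⟩, ?_⟩
  rintro i τ rfl v hv
  set c : Bidx → ℝ := fun p => if τ <+: p.1 then specialCoef n p else 0
  have hsq := hasSum_sq_specialCoef_restrict hn τ
  have hcoef : ∀ p,
      c p * ((μ.restrict (dyadicInterval τ)).real (A p) / volume.real (A p)) = c p := by
    intro p
    by_cases h : τ <+: p.1
    · have hτ := (hAs p).trans (dyadicInterval_anti h)
      have h01 := hτ.trans (dyadicInterval_subset_Icc τ)
      have hpos : 0 < volume.real (A p) := ENNReal.toReal_pos (hApos p).ne'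
        ((measure_mono h01).trans_lt measure_Icc_lt_top).ne
      rw [measureReal_def, Measure.restrict_eq_self _ hτ, Measure.restrict_eq_self _ h01,
        ← measureReal_def, div_self hpos.ne', mul_one]
    · simp [c, h]
  have hv_eq : v = ∑' p, c p • e p := by
    refine (SeparatingDual.eq_iff_forall_dual_eq (R := ℝ)).2 fun φ => ?_
    rw [hv φ]
    refine (clm_basicFun_integral (c := c) hAm hdisj he hsq.summable (hμ _) φ).2.trans ?_
    simp only [hcoef]
  rw [hv_eq, ← Real.sqrt_sq (norm_nonneg _), he.norm_tsum_smul_sq hsq.summable, hsq.tsum_eq,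
    sqrt_inv_two_pow_mul]
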